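/- arXiv:2511.18953 — 9 statements merged into one kernel-verified Lean document; each statement's English description precedes it below -/
import Mathlib

section
/- Let f be analytic on the unit disc with |f(z)| ≤ 1 for all |z| < 1, and write f(z) = ∑_{n≥0} a_n z^n. Then for every n ≥ 1, |a_n| ≤ 1 - |a_0|^2. -/
/-!
Averaging `f` over the rotations `z ↦ ω ^ k * z` by the `n`-th roots of unity keeps only the
coefficients of index divisible by `n`, and substituting `w = z ^ n` turns the result into the
function `w ↦ ∑ a (n * m) * w ^ m`, again bounded by `1` on the disc; so it suffices to treat
`n = 1`. That case is the Schwarz–Pick inequality at the origin: if `|a 0| < 1`, composing with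
the disc automorphism that sends `a 0` to `0` and applying the Schwarz lemma gives
`|a 1| ≤ 1 - |a 0| ^ 2`; if `|a 0| = 1`, the maximum modulus principle makes `f` constant.
-/

open Metric Set Finset Complex ComplexConjugate

theorem hasFPowerSeriesOnBall_ofScalars_of_hasSum {f : ℂ → ℂ} {a : ℕ → ℂ} {r : NNReal}
    (hr : 0 < r) (hf : ∀ z ∈ ball (0 : ℂ) r, HasSum (fun n => a n * z ^ n) (f z)) :
    HasFPowerSeriesOnBall f (FormalMultilinearSeries.ofScalars ℂ a) 0 r where
  r_le := by
    refine ENNReal.le_of_forall_nnreal_lt fun s hs => ?_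
    apply FormalMultilinearSeries.le_radius_of_summable
    have hs' : ((s : ℝ) : ℂ) ∈ ball (0 : ℂ) r := by simpa using hs
    -- unconditional summability is absolute in finite dimension
    simpa [norm_mul, FormalMultilinearSeries.ofScalars_norm] using (hf _ hs').summable.norm
  r_pos := by simpa using hr
  hasSum {y} hy := by
    simpa [mul_comm, FormalMultilinearSeries.ofScalars_apply_eq] using hf y (by simpa using hy)

theorem normSq_one_sub_conj_mul_sub_normSq_sub (c w : ℂ) :
    normSq (1 - conj c * w) - normSq (w - c) = (1 - normSq c) * (1 - normSq w) := by
  simp only [normSq_apply, sub_re, sub_im, mul_re, mul_im, one_re, one_im, conj_re, conj_im]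
  ring

theorem one_sub_conj_mul_ne_zero {c w : ℂ} (hc : ‖c‖ < 1) (hw : ‖w‖ ≤ 1) :
    1 - conj c * w ≠ 0 := by
  have : ‖conj c * w‖ < 1 := by
    rw [norm_mul, norm_conj]
    nlinarith [norm_nonneg c, norm_nonneg w]
  intro h
  rw [← sub_eq_zero.mp h, norm_one] at this
  exact this.false

theorem norm_sub_div_one_sub_conj_mul_le_one {c w : ℂ} (hc : ‖c‖ < 1) (hw : ‖w‖ ≤ 1) :
    ‖(w - c) / (1 - conj c * w)‖ ≤ 1 := by
  rw [norm_div, div_le_one (norm_pos_iff.mpr (one_sub_conj_mul_ne_zero hc hw)),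
    ← sq_le_sq₀ (norm_nonneg _) (norm_nonneg _), Complex.sq_norm, Complex.sq_norm, ← sub_nonneg,
    normSq_one_sub_conj_mul_sub_normSq_sub, normSq_eq_norm_sq, normSq_eq_norm_sq]
  exact mul_nonneg (by nlinarith [norm_nonneg c]) (by nlinarith [norm_nonneg w])

theorem norm_deriv_zero_le_one_sub_sq_of_norm_lt_one {g : ℂ → ℂ}
    (hd : DifferentiableOn ℂ g (ball 0 1)) (hg : MapsTo g (ball 0 1) (closedBall 0 1))
    (h0 : ‖g 0‖ < 1) : ‖deriv g 0‖ ≤ 1 - ‖g 0‖ ^ 2 := by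
  set c := g 0
  have hg' : ∀ z ∈ ball (0 : ℂ) 1, ‖g z‖ ≤ 1 := fun z hz => mem_closedBall_zero_iff.mp (hg hz)
  have hden : ∀ z ∈ ball (0 : ℂ) 1, 1 - conj c * g z ≠ 0 := fun z hz =>
    one_sub_conj_mul_ne_zero h0 (hg' z hz)
  set h : ℂ → ℂ := fun z => (g z - c) / (1 - conj c * g z)
  have hh0 : h 0 = 0 := by simp [h, c]
  have hdh : DifferentiableOn ℂ h (ball 0 1) :=
    (hd.sub_const c).div ((differentiableOn_const 1).sub (hd.const_mul _)) hden
  have hmaps : MapsTo h (ball 0 1) (closedBall (h 0) 1) := fun z hz => by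
    rw [hh0, mem_closedBall_zero_iff]
    exact norm_sub_div_one_sub_conj_mul_le_one h0 (hg' z hz)
  have hgd : HasDerivAt g (deriv g 0) 0 :=
    (hd.differentiableAt (ball_mem_nhds 0 one_pos)).hasDerivAt
  have hc : (1 : ℂ) - conj c * c = ((1 - ‖c‖ ^ 2 : ℝ) : ℂ) := by
    rw [conj_mul']; push_cast; ring
  have hc_pos : 0 < 1 - ‖c‖ ^ 2 := by nlinarith [norm_nonneg c]
  have hhd : HasDerivAt h (deriv g 0 / (1 - conj c * c)) 0 := by
    have := (hgd.sub_const c).div ((hgd.const_mul (conj c)).const_sub 1) (hden 0 (by simp))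
    rwa [sub_self, zero_mul, sub_zero, sq, mul_div_mul_right _ _ (hden 0 (by simp))] at this
  have := norm_deriv_le_one_of_mapsTo_ball hdh hmaps one_pos
  rwa [hhd.deriv, hc, norm_div, norm_real, Real.norm_of_nonneg hc_pos.le,
    div_le_one hc_pos] at this

theorem norm_deriv_zero_le_one_sub_sq {g : ℂ → ℂ}
    (hd : DifferentiableOn ℂ g (ball 0 1)) (hg : MapsTo g (ball 0 1) (closedBall 0 1)) :
    ‖deriv g 0‖ ≤ 1 - ‖g 0‖ ^ 2 := by
  rcases (mem_closedBall_zero_iff.mp (hg (mem_ball_self one_pos))).lt_or_eq with h0 | h0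
  · exact norm_deriv_zero_le_one_sub_sq_of_norm_lt_one hd hg h0
  have hmax : IsLocalMax (norm ∘ g) 0 := by
    filter_upwards [ball_mem_nhds (0 : ℂ) one_pos] with z hz
    simpa [h0] using hg hz
  have hconst : g =ᶠ[nhds 0] fun _ => g 0 := eventually_eq_of_isLocalMax_norm
    (hd.eventually_differentiableAt (ball_mem_nhds 0 one_pos)) hmax
  simp [hconst.deriv_eq, h0]

theorem IsPrimitiveRoot.sum_pow_pow_eq_ite {R : Type*} [CommRing R] [IsDomain R] {ω : R} {n : ℕ}
    (hω : IsPrimitiveRoot ω n) (j : ℕ) :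
    ∑ k ∈ range n, (ω ^ j) ^ k = if n ∣ j then (n : R) else 0 := by
  split_ifs with hj
  · simp [(hω.pow_eq_one_iff_dvd j).mpr hj]
  · have hne : ω ^ j ≠ 1 := fun h => hj ((hω.pow_eq_one_iff_dvd j).mp h)
    have hgeom := geom_sum_mul (ω ^ j) n
    rw [← pow_mul, mul_comm j n, pow_mul, hω.pow_eq_one, one_pow, sub_self] at hgeom
    exact (mul_eq_zero.mp hgeom).resolve_right (sub_ne_zero.mpr hne)

theorem IsPrimitiveRoot.hasSum_natCast_mul_comp_mul {R : Type*} [CommRing R] [IsDomain R]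
    [TopologicalSpace R] [IsTopologicalRing R] {ω : R} {n : ℕ} (hω : IsPrimitiveRoot ω n)
    (hn : 0 < n) {b S : ℕ → R} (hS : ∀ k < n, HasSum (fun j => b j * (ω ^ k) ^ j) (S k)) :
    HasSum (fun m => (n : R) * b (n * m)) (∑ k ∈ range n, S k) := by
  have hsum : HasSum (fun j => b j * if n ∣ j then (n : R) else 0) (∑ k ∈ range n, S k) := by
    refine (hasSum_sum fun k hk => hS k (mem_range.mp hk)).congr_fun fun j => ?_
    simp_rw [← hω.sum_pow_pow_eq_ite, mul_sum, ← pow_mul, mul_comm j]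
  have hinj : Function.Injective (n * ·) := fun _ _ => Nat.eq_of_mul_eq_mul_left hn
  rw [← hinj.hasSum_iff fun j hj => by
    rw [if_neg fun ⟨m, hm⟩ => hj ⟨m, hm.symm⟩, mul_zero]] at hsum
  convert hsum using 1
  ext m
  simp [mul_comm]

/-- Coefficient sequences of the Schur class: power series on the unit disc bounded by `1`. -/
def IsSchurCoeffs (a : ℕ → ℂ) : Prop :=
  ∀ z ∈ ball (0 : ℂ) 1, ∃ s, HasSum (fun n => a n * z ^ n) s ∧ ‖s‖ ≤ 1

namespace IsSchurCoeffs

variable {a : ℕ → ℂ}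

theorem comp_mul (ha : IsSchurCoeffs a) {n : ℕ} (hn : 0 < n) :
    IsSchurCoeffs fun m => a (n * m) := by
  intro w hw
  obtain ⟨ω, hω⟩ : ∃ ω : ℂ, IsPrimitiveRoot ω n := ⟨_, isPrimitiveRoot_exp n hn.ne'⟩
  obtain ⟨ζ, rfl⟩ := IsAlgClosed.exists_pow_nat_eq w hn
  have hζ : ‖ζ‖ < 1 := by
    rw [mem_ball_zero_iff, norm_pow] at hw
    exact (pow_lt_one_iff_of_nonneg (norm_nonneg _) hn.ne').mp hw
  have hmem (k : ℕ) : ω ^ k * ζ ∈ ball (0 : ℂ) 1 := by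
    simpa [hω.norm'_eq_one hn.ne'] using hζ
  choose s hs hs_le using fun k => ha _ (hmem k)
  refine ⟨(n : ℂ)⁻¹ * ∑ k ∈ range n, s k, ?_, ?_⟩
  · have := (hω.hasSum_natCast_mul_comp_mul hn (b := fun j => a j * ζ ^ j) fun k _ => by
      simpa [mul_pow, mul_comm, mul_left_comm, mul_assoc] using hs k).mul_left (n : ℂ)⁻¹
    have hn' : (n : ℂ) ≠ 0 := by exact_mod_cast hn.ne'
    simpa [← mul_assoc, inv_mul_cancel₀ hn', pow_mul] using this
  · calc ‖(n : ℂ)⁻¹ * ∑ k ∈ range n, s k‖ ≤ (n : ℝ)⁻¹ * ∑ k ∈ range n, ‖s k‖ := by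
          rw [norm_mul, norm_inv, Complex.norm_natCast]
          gcongr
          exact norm_sum_le _ _
      _ ≤ (n : ℝ)⁻¹ * n := by
          gcongr
          exact (sum_le_sum fun k _ => hs_le k).trans_eq (by simp)
      _ = 1 := inv_mul_cancel₀ (by exact_mod_cast hn.ne')

theorem norm_coeff_one_le (ha : IsSchurCoeffs a) : ‖a 1‖ ≤ 1 - ‖a 0‖ ^ 2 := by
  choose! g hg hg_le using ha
  have hps := hasFPowerSeriesOnBall_ofScalars_of_hasSum one_pos (by simpa using hg)
  have hd : DifferentiableOn ℂ g (ball 0 1) := by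
    simpa [← ENNReal.coe_one, eball_coe] using hps.differentiableOn
  have h0 : g 0 = a 0 := by simpa using (hps.coeff_zero fun _ => 0).symm
  have h1 : deriv g 0 = a 1 := by simpa using hps.hasFPowerSeriesAt.deriv
  simpa [h0, h1] using
    norm_deriv_zero_le_one_sub_sq hd fun z hz => mem_closedBall_zero_iff.mpr (hg_le z hz)

end IsSchurCoeffs

theorem bohr_coeff_bound
    (f : ℂ → ℂ) (a : ℕ → ℂ)
    (hf : ∀ z ∈ Metric.ball (0 : ℂ) 1, HasSum (fun n => a n * z ^ n) (f z))
    (hb : ∀ z ∈ Metric.ball (0 : ℂ) 1, ‖f z‖ ≤ 1) :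
    ∀ n : ℕ, 1 ≤ n → ‖a n‖ ≤ 1 - ‖a 0‖ ^ 2 := by
  intro n hn
  have ha : IsSchurCoeffs a := fun z hz => ⟨f z, hf z hz, hb z hz⟩
  simpa using (ha.comp_mul hn).norm_coeff_one_le
end

section
/- For all x ∈ [0,1), the sextic polynomial 121x^6 + 66√33 x^5 - 121x^4 - 132√33 x^3 + 135x^2 + 66√33 x - 135 is ≤ 0, and it equals 121(x^2-1)(x + 5√(3/11))(x + 3√(3/11))(x - √(3/11))^2. -/
theorem sextic_nonpos_and_factorization (x : ℝ) (hx0 : 0 ≤ x) (hx1 : x < 1) :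
    121 * x ^ 6 + 66 * Real.sqrt 33 * x ^ 5 - 121 * x ^ 4 - 132 * Real.sqrt 33 * x ^ 3 +
        135 * x ^ 2 + 66 * Real.sqrt 33 * x - 135 ≤ 0 ∧
    121 * x ^ 6 + 66 * Real.sqrt 33 * x ^ 5 - 121 * x ^ 4 - 132 * Real.sqrt 33 * x ^ 3 +
        135 * x ^ 2 + 66 * Real.sqrt 33 * x - 135 =
      121 * (x ^ 2 - 1) * (x + 5 * Real.sqrt (3 / 11)) * (x + 3 * Real.sqrt (3 / 11)) *
        (x - Real.sqrt (3 / 11)) ^ 2 := by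
  set s := Real.sqrt (3 / 11) with hs
  have hs0 : 0 ≤ s := Real.sqrt_nonneg _
  have hs2 : s ^ 2 = 3 / 11 := Real.sq_sqrt (by norm_num)
  have h33 : Real.sqrt 33 = 11 * s := by
    rw [hs, show (33:ℝ) = 11 ^ 2 * (3 / 11) by norm_num,
      Real.sqrt_mul (by positivity), Real.sqrt_sq (by norm_num)]
  have heq : 121 * x ^ 6 + 66 * Real.sqrt 33 * x ^ 5 - 121 * x ^ 4 -
      132 * Real.sqrt 33 * x ^ 3 + 135 * x ^ 2 + 66 * Real.sqrt 33 * x - 135 =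
      121 * (x ^ 2 - 1) * (x + 5 * s) * (x + 3 * s) * (x - s) ^ 2 := by
    rw [h33]; linear_combination (-1815 * x ^ 2 * s ^ 2 + 1815 * s ^ 2 + 2662 * x ^ 3 * s - 2662 * x * s - 495 * x ^ 2 + 495) * hs2
  refine ⟨?_, heq⟩
  rw [heq]
  have h1 : x ^ 2 - 1 < 0 := by nlinarith
  have h2 : 0 ≤ x + 5 * s := by linarith
  have h3 : 0 ≤ x + 3 * s := by linarith
  have h4 : 0 ≤ (x - s) ^ 2 := sq_nonneg _
  nlinarith [mul_nonneg (mul_nonneg h2 h3) h4]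
end

section
/- For all x ∈ [0,1] and r ∈ [0, √(11/27)], ((x+r)/(1+xr))^2 + r^2 (1-x^2)^2/(1 - x^2 r^2) ≤ 1. -/
theorem G_one_le_one (x r : ℝ) (hx0 : 0 ≤ x) (hx1 : x ≤ 1)
    (hr0 : 0 ≤ r) (hr1 : r ≤ Real.sqrt (11 / 27)) :
    ((x + r) / (1 + x * r)) ^ 2 + r ^ 2 * (1 - x ^ 2) ^ 2 / (1 - x ^ 2 * r ^ 2) ≤ 1 := by
  have hr2 : r ^ 2 ≤ 11 / 27 := by
    have h := Real.sq_sqrt (show (0:ℝ) ≤ 11 / 27 by norm_num)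
    nlinarith [Real.sqrt_nonneg (11 / 27 : ℝ)]
  have hxr0 : 0 ≤ x * r := mul_nonneg hx0 hr0
  have h1 : (0:ℝ) < 1 + x * r := by linarith
  have h2 : (0:ℝ) < 1 - x ^ 2 * r ^ 2 := by nlinarith
  rw [div_pow, div_add_div _ _ (by positivity) h2.ne', div_le_one (by positivity)]
  have key : 0 ≤ (1 - x ^ 2) * (1 + x * r) *
      ((x * r - 1/3) ^ 2 * (x * r + 5/3) + 2 * (11/27 - r ^ 2)) := by
    apply mul_nonneg (mul_nonneg (by nlinarith) h1.le)
    have : 0 ≤ (x * r - 1/3) ^ 2 * (x * r + 5/3) := by positivity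
    linarith
  nlinarith [key]
end

section
/- Define G(x,r) = ((x+r)/(1+xr))^2 + r^2 (1-x^2)^2/(1 - x^2 r^2) - 1 for x ∈ [0,1) and r ∈ [0,1). Then for each fixed x, the function r ↦ G(x,r) is monotonically increasing on [0,1). -/
theorem G_monotone_in_r (x : ℝ) (hx0 : 0 ≤ x) (hx1 : x < 1) :
    MonotoneOn (fun r : ℝ =>
      ((x + r) / (1 + x * r)) ^ 2 + r ^ 2 * (1 - x ^ 2) ^ 2 / (1 - x ^ 2 * r ^ 2) - 1)
      (Set.Ico (0 : ℝ) 1) := by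
  intro r hr s hs hrs
  obtain ⟨hr0, hr1⟩ := hr
  obtain ⟨hs0, hs1⟩ := hs
  have hx2 : x ^ 2 < 1 := by nlinarith
  have hdr : (0 : ℝ) < 1 + x * r := by nlinarith
  have hds : (0 : ℝ) < 1 + x * s := by nlinarith
  have hqr : (0 : ℝ) < 1 - x ^ 2 * r ^ 2 := by nlinarith
  have hqs : (0 : ℝ) < 1 - x ^ 2 * s ^ 2 := by nlinarith
  have h1 : (x + r) / (1 + x * r) ≤ (x + s) / (1 + x * s) := by
    rw [div_le_div_iff₀ hdr hds]
    nlinarith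
  have h1n : (0 : ℝ) ≤ (x + r) / (1 + x * r) := by positivity
  have hsq : ((x + r) / (1 + x * r)) ^ 2 ≤ ((x + s) / (1 + x * s)) ^ 2 :=
    pow_le_pow_left₀ h1n h1 2
  have h2 : r ^ 2 * (1 - x ^ 2) ^ 2 / (1 - x ^ 2 * r ^ 2)
      ≤ s ^ 2 * (1 - x ^ 2) ^ 2 / (1 - x ^ 2 * s ^ 2) := by
    have hr2 : r ^ 2 ≤ s ^ 2 := by nlinarith
    apply div_le_div₀ (by positivity) (mul_le_mul_of_nonneg_right hr2 (sq_nonneg _)) hqs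
    nlinarith [mul_le_mul_of_nonneg_left hr2 (sq_nonneg x)]
  simp only
  linarith
end

section
/- Let λ = √(3/11). For every real r with √(11/27) < r < 1, ((λ+r)/(1+λr))^2 + (1-λ^2)^2 r^2/(1 - λ^2 r^2) > 1. Equivalently, 64r^2/(121 - 33r^2) + (11r + √33)^2/(√33 r + 11)^2 > 1 for such r. -/
theorem sharpness_sqrt_11_27 (r : ℝ) (hr : Real.sqrt (11 / 27) < r) (hr1 : r < 1) :
    (1 : ℝ) < ((Real.sqrt (3 / 11) + r) / (1 + Real.sqrt (3 / 11) * r)) ^ 2 +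
        (1 - Real.sqrt (3 / 11) ^ 2) ^ 2 * r ^ 2 / (1 - Real.sqrt (3 / 11) ^ 2 * r ^ 2) ∧
    (1 : ℝ) < 64 * r ^ 2 / (121 - 33 * r ^ 2) +
        (11 * r + Real.sqrt 33) ^ 2 / (Real.sqrt 33 * r + 11) ^ 2 := by
  set s := Real.sqrt 33 with hsdef
  have hs : s ^ 2 = 33 := Real.sq_sqrt (by norm_num)
  have hsp : 0 < s := Real.sqrt_pos.mpr (by norm_num)
  have h27 : Real.sqrt (11 / 27) = s / 9 := by
    rw [hsdef, show (11 : ℝ) / 27 = 33 / 9 ^ 2 by norm_num,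
      Real.sqrt_div (by norm_num : (0:ℝ) ≤ 33), Real.sqrt_sq (by norm_num : (0:ℝ) ≤ 9)]
  have h311 : Real.sqrt (3 / 11) = s / 11 := by
    rw [hsdef, show (3 : ℝ) / 11 = 33 / 11 ^ 2 by norm_num,
      Real.sqrt_div (by norm_num : (0:ℝ) ≤ 33), Real.sqrt_sq (by norm_num : (0:ℝ) ≤ 11)]
  have hsq : Real.sqrt (3 / 11) ^ 2 = 3 / 11 := Real.sq_sqrt (by norm_num)
  rw [h27] at hr
  have hrp : 0 < r := lt_trans (div_pos hsp (by norm_num)) hr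
  have h9 : 0 < 9 * r - s := by
    have := (div_lt_iff₀ (by norm_num : (0:ℝ) < 9)).mp hr
    linarith
  have hg : 0 < -33 * r ^ 3 + 55 * s * r ^ 2 + 1089 * r + 121 * s := by
    nlinarith [mul_pos hrp hrp, mul_pos (mul_pos hrp hrp) hrp, mul_pos hrp hsp,
      mul_pos (mul_pos hrp hrp) hsp]
  have hid : 3 * (-99 * r ^ 4 + 176 * s * r ^ 3 + 2662 * r ^ 2 - 1331) =
      (9 * r - s) * (-33 * r ^ 3 + 55 * s * r ^ 2 + 1089 * r + 121 * s) := by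
    linear_combination (55 * r ^ 2 + 121) * hs
  have key : 0 < -99 * r ^ 4 + 176 * s * r ^ 3 + 2662 * r ^ 2 - 1331 := by
    nlinarith [mul_pos h9 hg]
  have hd : 0 < 121 - 33 * r ^ 2 := by nlinarith
  have hsr : 0 < s * r + 11 := by positivity
  have key2 : 64 * r ^ 2 * (s * r + 11) ^ 2 + (11 * r + s) ^ 2 * (121 - 33 * r ^ 2) -
      (121 - 33 * r ^ 2) * (s * r + 11) ^ 2 =
      8 * (-99 * r ^ 4 + 176 * s * r ^ 3 + 2662 * r ^ 2 - 1331) := by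
    linear_combination (64 * r ^ 4 - (r ^ 2 - 1) * (121 - 33 * r ^ 2)) * hs
  have goal2 : (1 : ℝ) < 64 * r ^ 2 / (121 - 33 * r ^ 2) + (11 * r + s) ^ 2 / (s * r + 11) ^ 2 := by
    rw [div_add_div _ _ (ne_of_gt hd) (by positivity : ((s * r + 11) ^ 2 : ℝ) ≠ 0),
      lt_div_iff₀ (by positivity)]
    nlinarith [key, key2]
  refine ⟨?_, goal2⟩
  have hne1 : (1 + s / 11 * r : ℝ) ≠ 0 := by positivity
  have hne2 : (s * r + 11 : ℝ) ≠ 0 := ne_of_gt hsr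
  have e1 : (s / 11 + r) / (1 + s / 11 * r) = (11 * r + s) / (s * r + 11) := by
    rw [div_eq_div_iff hne1 hne2]; ring
  have hne3 : (1 - 3 / 11 * r ^ 2 : ℝ) ≠ 0 := by nlinarith
  have hne4 : (121 - 33 * r ^ 2 : ℝ) ≠ 0 := ne_of_gt hd
  have e2 : ((1 - 3 / 11 : ℝ)) ^ 2 * r ^ 2 / (1 - 3 / 11 * r ^ 2) =
      64 * r ^ 2 / (121 - 33 * r ^ 2) := by
    rw [div_eq_div_iff hne3 hne4]; ring
  rw [hsq, h311, e1, e2, div_pow]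
  linarith [goal2]
end

section
/- Let f(z) = ∑_{n≥0} a_n z^n be analytic on the unit disc with |f(z)| ≤ 1 there. Then for all r = |z| ≤ 1/5: |f(z) - f(0)| + |f(0)| + ∑_{n≥1} |a_n| r^n + (1/(1+|a_0|) + r/(1-r)) ∑_{n≥1} |a_n|^2 r^{2n} ≤ 1. -/
/-!
By Wiener's inequality `‖a n‖ ≤ 1 - ‖a 0‖ ^ 2` for `n ≥ 1`, each sum on the left is dominated
by a geometric series in `r = ‖z‖` whose coefficients depend only on `A = ‖a 0‖`, as does
`‖f z - f 0‖`; for `r ≤ 1 / 5` the resulting expression in `A` and `r` is at most `1`.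

Wiener's inequality reduces to `n = 1`: averaging `f` over the rotations by the `n`-th roots of
unity and substituting `w = z ^ n` gives a self-map of the disc with Taylor coefficients
`a (n * m)`. For `n = 1` it is the Schwarz–Pick inequality `‖g' 0‖ ≤ 1 - ‖g 0‖ ^ 2`, which is the
Schwarz lemma applied to `g` followed by the Blaschke factor sending `g 0` to `0`.
-/

open Metric Set Finset ComplexConjugate
open scoped NNReal

namespace Complex

noncomputable def blaschkeFactor (A ζ : ℂ) : ℂ := (ζ - A) / (1 - conj A * ζ)

lemma normSq_one_sub_conj_mul_sub_normSq_sub (A ζ : ℂ) :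
    normSq (1 - conj A * ζ) - normSq (ζ - A) = (1 - normSq A) * (1 - normSq ζ) := by
  simp only [normSq_apply, sub_re, sub_im, one_re, one_im, mul_re, mul_im, conj_re, conj_im]
  ring

variable {A ζ : ℂ}

lemma one_sub_conj_mul_ne_zero (hA : ‖A‖ < 1) (hζ : ‖ζ‖ ≤ 1) : 1 - conj A * ζ ≠ 0 := by
  have : ‖conj A * ζ‖ < 1 := by
    rw [norm_mul, norm_conj]
    nlinarith [norm_nonneg A, norm_nonneg ζ]
  intro h
  rw [← sub_eq_zero.mp h, norm_one] at this
  exact this.false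

lemma norm_blaschkeFactor_le_one (hA : ‖A‖ < 1) (hζ : ‖ζ‖ ≤ 1) : ‖blaschkeFactor A ζ‖ ≤ 1 := by
  have hne := one_sub_conj_mul_ne_zero hA hζ
  rw [blaschkeFactor, norm_div, div_le_one (norm_pos_iff.mpr hne),
    ← sq_le_sq₀ (norm_nonneg _) (norm_nonneg _), Complex.sq_norm, Complex.sq_norm]
  have hA' : normSq A ≤ 1 := by rw [normSq_eq_norm_sq]; nlinarith [norm_nonneg A]
  have hζ' : normSq ζ ≤ 1 := by rw [normSq_eq_norm_sq]; nlinarith [norm_nonneg ζ]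
  nlinarith [normSq_one_sub_conj_mul_sub_normSq_sub A ζ]

lemma blaschkeFactor_self (A : ℂ) : blaschkeFactor A A = 0 := by
  simp [blaschkeFactor]

lemma hasDerivAt_blaschkeFactor_self (hA : ‖A‖ < 1) :
    HasDerivAt (blaschkeFactor A) (((1 - ‖A‖ ^ 2 : ℝ) : ℂ)⁻¹) A := by
  have hne := one_sub_conj_mul_ne_zero hA hA.le
  have hden : 1 - conj A * A = ((1 - ‖A‖ ^ 2 : ℝ) : ℂ) := by
    rw [conj_mul']; push_cast; ring
  have h := ((hasDerivAt_id' A).sub_const A).div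
    (((hasDerivAt_id' A).const_mul (conj A)).const_sub 1) hne
  refine h.congr_deriv ?_
  rw [← hden]
  field_simp
  ring

lemma differentiableAt_blaschkeFactor (hA : ‖A‖ < 1) (hζ : ‖ζ‖ ≤ 1) :
    DifferentiableAt ℂ (blaschkeFactor A) ζ :=
  ((differentiableAt_id.sub_const A).div
    ((differentiableAt_id.const_mul _).const_sub 1) (one_sub_conj_mul_ne_zero hA hζ))

lemma deriv_eq_zero_of_norm_eq_one_of_mapsTo {g : ℂ → ℂ} (hd : DifferentiableOn ℂ g (ball 0 1))
    (hmaps : MapsTo g (ball 0 1) (closedBall 0 1)) (hg0 : ‖g 0‖ = 1) : deriv g 0 = 0 := by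
  have h0 : (0 : ℂ) ∈ ball (0 : ℂ) 1 := mem_ball_self one_pos
  have hmax : IsMaxOn (norm ∘ g) (ball 0 1) 0 := fun w hw => by
    simpa [hg0] using hmaps hw
  have hconst := eqOn_of_isPreconnected_of_isMaxOn_norm
    (convex_ball (0 : ℂ) 1).isPreconnected isOpen_ball hd h0 hmax
  rw [(Filter.eventuallyEq_of_mem (isOpen_ball.mem_nhds h0) hconst).deriv_eq]
  exact deriv_const 0 (g 0)

/-- The Schwarz–Pick inequality at the centre of the disc. -/
theorem norm_deriv_le_one_sub_sq_of_mapsTo {g : ℂ → ℂ} (hd : DifferentiableOn ℂ g (ball 0 1))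
    (hmaps : MapsTo g (ball 0 1) (closedBall 0 1)) : ‖deriv g 0‖ ≤ 1 - ‖g 0‖ ^ 2 := by
  have h0 : (0 : ℂ) ∈ ball (0 : ℂ) 1 := mem_ball_self one_pos
  have hg0 : ‖g 0‖ ≤ 1 := mem_closedBall_zero_iff.mp (hmaps h0)
  rcases hg0.eq_or_lt with hg0 | hg0
  · simp [deriv_eq_zero_of_norm_eq_one_of_mapsTo hd hmaps hg0, hg0]
  set A := g 0
  have hB : DifferentiableOn ℂ (blaschkeFactor A ∘ g) (ball 0 1) := fun w hw =>
    ((differentiableAt_blaschkeFactor hg0 (mem_closedBall_zero_iff.mp (hmaps hw))).comp w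
      (hd.differentiableAt (isOpen_ball.mem_nhds hw))).differentiableWithinAt
  have hBmaps : MapsTo (blaschkeFactor A ∘ g) (ball 0 1) (closedBall (blaschkeFactor A (g 0)) 1) :=
    fun w hw => by
      rw [blaschkeFactor_self, mem_closedBall_zero_iff]
      exact norm_blaschkeFactor_le_one hg0 (mem_closedBall_zero_iff.mp (hmaps hw))
  have hchain : deriv (blaschkeFactor A ∘ g) 0 = ((1 - ‖A‖ ^ 2 : ℝ) : ℂ)⁻¹ * deriv g 0 :=
    ((hasDerivAt_blaschkeFactor_self hg0).comp 0
      (hd.differentiableAt (isOpen_ball.mem_nhds h0)).hasDerivAt).deriv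
  have hpos : 0 < 1 - ‖A‖ ^ 2 := by nlinarith [norm_nonneg A]
  have := norm_deriv_le_one_of_mapsTo_ball hB hBmaps one_pos
  rwa [hchain, norm_mul, norm_inv, Complex.norm_real, Real.norm_of_nonneg hpos.le,
    inv_mul_le_iff₀ hpos, mul_one] at this

end Complex

lemma hasFPowerSeriesOnBall_ofScalars_of_hasSum_s11 {c : ℕ → ℂ} {h : ℂ → ℂ} {R : ℝ≥0} (hR : 0 < R)
    (hs : ∀ w ∈ ball (0 : ℂ) R, HasSum (fun m => c m * w ^ m) (h w)) :
    HasFPowerSeriesOnBall h (FormalMultilinearSeries.ofScalars ℂ c) 0 R := by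
  refine ⟨ENNReal.le_of_forall_nnreal_lt fun r hr => ?_, ENNReal.coe_pos.mpr hR, fun hy => ?_⟩
  · have hr : ((r : ℝ) : ℂ) ∈ ball (0 : ℂ) R := by
      simpa [abs_of_nonneg r.coe_nonneg] using hr
    refine FormalMultilinearSeries.le_radius_of_summable_norm _ ?_
    simpa [FormalMultilinearSeries.ofScalars_norm, abs_of_nonneg r.coe_nonneg] using
      (hs _ hr).summable.norm
  · rw [Metric.eball_coe] at hy
    simpa [FormalMultilinearSeries.ofScalars_apply_eq, mul_comm] using hs _ hy

theorem norm_coeff_one_le_one_sub_sq {c : ℕ → ℂ} {h : ℂ → ℂ}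
    (hs : ∀ w ∈ ball (0 : ℂ) 1, HasSum (fun m => c m * w ^ m) (h w))
    (hbd : ∀ w ∈ ball (0 : ℂ) 1, ‖h w‖ ≤ 1) : ‖c 1‖ ≤ 1 - ‖c 0‖ ^ 2 := by
  have hps := hasFPowerSeriesOnBall_ofScalars_of_hasSum_s11 one_pos (by simpa using hs)
  have hd : DifferentiableOn ℂ h (ball 0 1) := by
    simpa only [Metric.eball_coe, NNReal.coe_one] using hps.differentiableOn
  have hderiv : deriv h 0 = c 1 := by
    simp [hps.hasFPowerSeriesAt.deriv]
  have hval : h 0 = c 0 := by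
    simpa using (hps.hasFPowerSeriesAt.coeff_zero ![]).symm
  rw [← hderiv, ← hval]
  exact Complex.norm_deriv_le_one_sub_sq_of_mapsTo hd fun w hw =>
    mem_closedBall_zero_iff.mpr (hbd w hw)

theorem IsPrimitiveRoot.sum_range_pow_pow_eq_ite {R : Type*} [CommRing R] [IsDomain R] {ω : R}
    {n : ℕ} (hω : IsPrimitiveRoot ω n) (k : ℕ) :
    ∑ j ∈ range n, (ω ^ k) ^ j = if n ∣ k then (n : R) else 0 := by
  split_ifs with hk
  · simp [(hω.pow_eq_one_iff_dvd k).mpr hk]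
  · have hne : ω ^ k - 1 ≠ 0 := sub_ne_zero.mpr fun h => hk ((hω.pow_eq_one_iff_dvd k).mp h)
    refine eq_zero_of_ne_zero_of_mul_right_eq_zero hne ?_
    rw [geom_sum_mul, pow_right_comm, hω.pow_eq_one, one_pow, sub_self]

theorem hasSum_comp_mul_of_isPrimitiveRoot {K : Type*} [Field K] [CharZero K] [TopologicalSpace K]
    [IsTopologicalRing K] {ω : K} {n : ℕ} (hω : IsPrimitiveRoot ω n) (hn : 0 < n) {g F : ℕ → K}
    (hF : ∀ j ∈ range n, HasSum (fun k => (ω ^ j) ^ k * g k) (F j)) :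
    HasSum (fun m => g (n * m)) ((∑ j ∈ range n, F j) / n) := by
  have hsum := hasSum_sum hF
  have hterm : (fun k => ∑ j ∈ range n, (ω ^ j) ^ k * g k) =
      fun k => if n ∣ k then (n : K) * g k else 0 := by
    funext k
    simp_rw [pow_right_comm ω _ k, ← Finset.sum_mul, hω.sum_range_pow_pow_eq_ite k, ite_mul,
      zero_mul]
  rw [hterm, ← (mul_right_injective₀ (Nat.pos_iff_ne_zero.mp hn)).hasSum_iff] at hsum
  · convert hsum.div_const (n : K) using 2 with m
    simp [Nat.cast_ne_zero.mpr hn.ne']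
  · intro k hk
    rw [if_neg]
    rintro ⟨m, rfl⟩
    exact hk ⟨m, rfl⟩

section UnitDisc

variable {f : ℂ → ℂ} {a : ℕ → ℂ}

lemma norm_sum_div_card_le_one {n : ℕ} {F : ℕ → ℂ} (hF : ∀ j ∈ range n, ‖F j‖ ≤ 1) :
    ‖(∑ j ∈ range n, F j) / n‖ ≤ 1 := by
  rcases n.eq_zero_or_pos with rfl | hn
  · simp
  rw [norm_div, Complex.norm_natCast, div_le_one (by exact_mod_cast hn)]
  calc ‖∑ j ∈ range n, F j‖ ≤ ∑ j ∈ range n, ‖F j‖ := norm_sum_le _ _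
    _ ≤ ∑ _j ∈ range n, 1 := Finset.sum_le_sum hF
    _ = n := by simp

lemma exists_hasSum_comp_mul_norm_le_one
    (hf : ∀ z ∈ ball (0 : ℂ) 1, HasSum (fun k => a k * z ^ k) (f z))
    (hb : ∀ z ∈ ball (0 : ℂ) 1, ‖f z‖ ≤ 1) {n : ℕ} (hn : 0 < n) {w : ℂ} (hw : w ∈ ball (0 : ℂ) 1) :
    ∃ s, HasSum (fun m => a (n * m) * w ^ m) s ∧ ‖s‖ ≤ 1 := by
  obtain ⟨z, rfl⟩ := IsAlgClosed.exists_pow_nat_eq w hn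
  have hω := Complex.isPrimitiveRoot_exp n hn.ne'
  set ω := Complex.exp (2 * Real.pi * Complex.I / n)
  have hz : ‖z‖ < 1 := by
    rw [mem_ball_zero_iff, norm_pow] at hw
    exact (pow_lt_one_iff_of_nonneg (norm_nonneg z) hn.ne').mp hw
  have hrot : ∀ j, ω ^ j * z ∈ ball (0 : ℂ) 1 := fun j => by
    rw [mem_ball_zero_iff, norm_mul, norm_pow, hω.norm'_eq_one hn.ne', one_pow, one_mul]
    exact hz
  refine ⟨(∑ j ∈ range n, f (ω ^ j * z)) / n, ?_, norm_sum_div_card_le_one fun j _ => hb _ (hrot j)⟩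
  simp_rw [← pow_mul]
  refine hasSum_comp_mul_of_isPrimitiveRoot (g := fun k => a k * z ^ k) hω hn fun j _ => ?_
  have hterm : (fun k => (ω ^ j) ^ k * (a k * z ^ k)) = fun k => a k * (ω ^ j * z) ^ k := by
    funext k
    rw [mul_pow, mul_left_comm]
  exact hterm ▸ hf _ (hrot j)

/-- Wiener's inequality. -/
theorem norm_coeff_le_one_sub_sq
    (hf : ∀ z ∈ ball (0 : ℂ) 1, HasSum (fun k => a k * z ^ k) (f z))
    (hb : ∀ z ∈ ball (0 : ℂ) 1, ‖f z‖ ≤ 1) {n : ℕ} (hn : 0 < n) :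
    ‖a n‖ ≤ 1 - ‖a 0‖ ^ 2 := by
  choose! h hs hbd using fun w (hw : w ∈ ball (0 : ℂ) 1) =>
    exists_hasSum_comp_mul_norm_le_one hf hb hn hw
  simpa using norm_coeff_one_le_one_sub_sq (c := fun m => a (n * m)) hs hbd

end UnitDisc

section GeometricMajorant

variable {b : ℕ → ℝ} {M ρ : ℝ}

lemma summable_mul_pow_succ_of_le (hb0 : ∀ k, 0 ≤ b k) (hbM : ∀ k, b k ≤ M) (hρ0 : 0 ≤ ρ)
    (hρ1 : ρ < 1) : Summable fun k => b k * ρ ^ (k + 1) :=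
  .of_nonneg_of_le (fun k => mul_nonneg (hb0 k) (pow_nonneg hρ0 _))
    (fun k => mul_le_mul_of_nonneg_right (hbM k) (pow_nonneg hρ0 _))
    ((summable_geometric_of_lt_one hρ0 hρ1).mul_left ρ |>.mul_left M |>.congr fun k => by ring)

lemma tsum_mul_pow_succ_le (hb0 : ∀ k, 0 ≤ b k) (hbM : ∀ k, b k ≤ M) (hρ0 : 0 ≤ ρ)
    (hρ1 : ρ < 1) : ∑' k, b k * ρ ^ (k + 1) ≤ M * (ρ / (1 - ρ)) := by
  have hgeom : HasSum (fun k => M * ρ ^ (k + 1)) (M * (ρ / (1 - ρ))) := by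
    simpa only [pow_succ', ← mul_assoc, div_eq_mul_inv, mul_assoc] using
      (hasSum_geometric_of_lt_one hρ0 hρ1).mul_left (M * ρ)
  exact hasSum_le (fun k => mul_le_mul_of_nonneg_right (hbM k) (pow_nonneg hρ0 _))
    (summable_mul_pow_succ_of_le hb0 hbM hρ0 hρ1).hasSum hgeom

end GeometricMajorant

lemma norm_sub_coeff_zero_le_tsum {𝕜 : Type*} [NormedField 𝕜] {a : ℕ → 𝕜} {z s : 𝕜}
    (hs : HasSum (fun k => a k * z ^ k) s)
    (hsum : Summable fun k => ‖a (k + 1)‖ * ‖z‖ ^ (k + 1)) :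
    ‖s - a 0‖ ≤ ∑' k, ‖a (k + 1)‖ * ‖z‖ ^ (k + 1) := by
  have htail := (hasSum_nat_add_iff' 1).mpr hs
  simp only [Finset.range_one, Finset.sum_singleton, pow_zero, mul_one] at htail
  exact htail.norm_le_of_bounded hsum.hasSum fun k => by rw [norm_mul, norm_pow]

lemma bohr_majorant_le_one {A r : ℝ} (hA0 : 0 ≤ A) (hA1 : A ≤ 1) (hr0 : 0 ≤ r) (hr : r ≤ 1 / 5) :
    A + 2 * ((1 - A ^ 2) * (r / (1 - r))) +
      (1 / (1 + A) + r / (1 - r)) * ((1 - A ^ 2) ^ 2 * (r ^ 2 / (1 - r ^ 2))) ≤ 1 := by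
  have hx : r / (1 - r) ≤ 1 / 4 := by rw [div_le_iff₀ (by linarith)]; linarith
  have hy : r ^ 2 / (1 - r ^ 2) ≤ 1 / 24 := by rw [div_le_iff₀ (by nlinarith)]; nlinarith
  have hc : 1 / (1 + A) ≤ 1 := by rw [div_le_one (by linarith)]; linarith
  have hL0 : 0 ≤ 1 - A ^ 2 := by nlinarith
  have hL : 1 - A ^ 2 ≤ 2 * (1 - A) := by nlinarith
  -- `1 - A - (1 - A ^ 2) / 2 = (1 - A) ^ 2 / 2` absorbs the quadratic term with room to spare.
  calc _ ≤ A + 2 * ((1 - A ^ 2) * (1 / 4)) + (1 + 1 / 4) * ((1 - A ^ 2) ^ 2 * (1 / 24)) := by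
        have : 0 ≤ r / (1 - r) := div_nonneg hr0 (by linarith)
        have : 0 ≤ r ^ 2 / (1 - r ^ 2) := div_nonneg (sq_nonneg r) (by nlinarith)
        gcongr
    _ ≤ 1 := by nlinarith [mul_le_mul hL hL hL0 (by linarith)]

theorem refined_bohr_p1_one_variable
    (f : ℂ → ℂ) (a : ℕ → ℂ)
    (hf : ∀ z ∈ Metric.ball (0 : ℂ) 1, HasSum (fun n => a n * z ^ n) (f z))
    (hb : ∀ z ∈ Metric.ball (0 : ℂ) 1, ‖f z‖ ≤ 1)
    (z : ℂ) (hz : ‖z‖ ≤ 1 / 5) :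
    ‖f z - f 0‖ + ‖f 0‖ +
      (∑' n : ℕ, ‖a (n + 1)‖ * (‖z‖) ^ (n + 1)) +
      (1 / (1 + ‖a 0‖) + ‖z‖ / (1 - ‖z‖)) *
        (∑' n : ℕ, (‖a (n + 1)‖) ^ 2 * (‖z‖) ^ (2 * (n + 1))) ≤ 1 := by
  have hr1 : ‖z‖ < 1 := hz.trans_lt (by norm_num)
  have h0 : (0 : ℂ) ∈ ball (0 : ℂ) 1 := mem_ball_self one_pos
  have hf0 : f 0 = a 0 := (hf 0 h0).unique <| by
    simpa using hasSum_single (f := fun n => a n * (0 : ℂ) ^ n) 0 fun m hm => by simp [hm]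
  have hA1 : ‖a 0‖ ≤ 1 := hf0 ▸ hb 0 h0
  have hcoef : ∀ k, ‖a (k + 1)‖ ≤ 1 - ‖a 0‖ ^ 2 := fun k =>
    norm_coeff_le_one_sub_sq hf hb k.succ_pos
  have hsq : ∀ k, ‖a (k + 1)‖ ^ 2 ≤ (1 - ‖a 0‖ ^ 2) ^ 2 := fun k =>
    pow_le_pow_left₀ (norm_nonneg _) (hcoef k) 2
  have hS1 := tsum_mul_pow_succ_le (fun k => norm_nonneg _) hcoef (norm_nonneg z) hr1
  have hS2 := tsum_mul_pow_succ_le (fun k => sq_nonneg _) hsq (sq_nonneg ‖z‖)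
    (by nlinarith [norm_nonneg z])
  have hdiff := norm_sub_coeff_zero_le_tsum (hf z (mem_ball_zero_iff.mpr hr1))
    (summable_mul_pow_succ_of_le (fun k => norm_nonneg _) hcoef (norm_nonneg z) hr1)
  simp_rw [pow_mul]
  rw [hf0]
  calc _ ≤ (1 - ‖a 0‖ ^ 2) * (‖z‖ / (1 - ‖z‖)) + ‖a 0‖ + (1 - ‖a 0‖ ^ 2) * (‖z‖ / (1 - ‖z‖)) +
        (1 / (1 + ‖a 0‖) + ‖z‖ / (1 - ‖z‖)) *
          ((1 - ‖a 0‖ ^ 2) ^ 2 * (‖z‖ ^ 2 / (1 - ‖z‖ ^ 2))) := by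
        gcongr
        exact hdiff.trans hS1
    _ ≤ 1 := by linarith [bohr_majorant_le_one (norm_nonneg (a 0)) hA1 (norm_nonneg z) hz]
end

section
/- For λ ∈ (0,1) and r ∈ (0,1), with g(t) = (λ - t)/(1 - λt), one has |g(0)| + ∑_{n≥1} |c_n| r^n + (1/(1+λ) + r/(1-r)) ∑_{n≥1} |c_n|^2 r^{2n} + |g(r) - g(0)| = 1 + (1-λ)[(1+λ)r/(1-λr) + (1+λ)r/(1-r) - 1], where c_n = λ^{n-1}(λ^2 - 1) are the Taylor coefficients of g. -/
/-! Every term is explicit: the coefficient series ∑ |cₙ| rⁿ and ∑ |cₙ|² r²ⁿ are geometric with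
ratios λr and λ²r², and g(r) - g(0) = r(λ² - 1)/(1 - λr). Substituting these closed forms turns
the identity into an equation of rational functions in λ and r. -/

theorem tsum_abs_pow_mul_mul_pow_succ {lam r : ℝ} (hlr : |lam * r| < 1) :
    ∑' n : ℕ, |lam ^ n * (lam ^ 2 - 1)| * r ^ (n + 1) = |lam ^ 2 - 1| * r / (1 - |lam| * r) := by
  have hterm : ∀ n : ℕ, |lam ^ n * (lam ^ 2 - 1)| * r ^ (n + 1)
      = |lam ^ 2 - 1| * r * (|lam| * r) ^ n := fun n => by
    rw [abs_mul, abs_pow, mul_pow]; ring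
  have hratio : ‖|lam| * r‖ < 1 := by
    rwa [Real.norm_eq_abs, abs_mul, abs_abs, ← abs_mul]
  rw [tsum_congr hterm, tsum_mul_left, tsum_geometric_of_norm_lt_one hratio, div_eq_mul_inv]

theorem tsum_sq_abs_pow_mul_mul_pow_two_mul_succ {lam r : ℝ} (hlr : |lam * r| < 1) :
    ∑' n : ℕ, |lam ^ n * (lam ^ 2 - 1)| ^ 2 * r ^ (2 * (n + 1))
      = (lam ^ 2 - 1) ^ 2 * r ^ 2 / (1 - lam ^ 2 * r ^ 2) := by
  have hterm : ∀ n : ℕ, |lam ^ n * (lam ^ 2 - 1)| ^ 2 * r ^ (2 * (n + 1))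
      = (lam ^ 2 - 1) ^ 2 * r ^ 2 * (lam ^ 2 * r ^ 2) ^ n := fun n => by
    rw [sq_abs, pow_mul, mul_pow, mul_pow, ← pow_mul, ← pow_mul]; ring
  have hratio : ‖lam ^ 2 * r ^ 2‖ < 1 := by
    rw [Real.norm_eq_abs, ← mul_pow, abs_pow]
    exact pow_lt_one₀ (abs_nonneg _) hlr two_ne_zero
  rw [tsum_congr hterm, tsum_mul_left, tsum_geometric_of_norm_lt_one hratio, div_eq_mul_inv]

theorem mobius_sub_mobius_zero {lam r : ℝ} (hlr : lam * r ≠ 1) :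
    (lam - r) / (1 - lam * r) - (lam - 0) / (1 - lam * 0) = r * (lam ^ 2 - 1) / (1 - lam * r) := by
  have hne : 1 - lam * r ≠ 0 := sub_ne_zero.mpr (Ne.symm hlr)
  field_simp
  ring

theorem mobius_sharpness_identity (lam r : ℝ) (hl : lam ∈ Set.Ioo (0 : ℝ) 1)
    (hr : r ∈ Set.Ioo (0 : ℝ) 1) :
    |((lam - 0) / (1 - lam * 0))| +
      (∑' n : ℕ, |lam ^ n * (lam ^ 2 - 1)| * r ^ (n + 1)) +
      (1 / (1 + lam) + r / (1 - r)) *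
        (∑' n : ℕ, |lam ^ n * (lam ^ 2 - 1)| ^ 2 * r ^ (2 * (n + 1))) +
      |(lam - r) / (1 - lam * r) - (lam - 0) / (1 - lam * 0)| =
    1 + (1 - lam) * ((1 + lam) * r / (1 - lam * r) + (1 + lam) * r / (1 - r) - 1) := by
  obtain ⟨hl0, hl1⟩ := hl
  obtain ⟨hr0, hr1⟩ := hr
  have hlr : lam * r < 1 := by nlinarith
  have hlr_abs : |lam * r| < 1 := by rwa [abs_of_pos (mul_pos hl0 hr0)]
  have hsq : |lam ^ 2 - 1| = 1 - lam ^ 2 := by rw [abs_of_nonpos (by nlinarith)]; ring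
  have hmob : |(lam - r) / (1 - lam * r) - (lam - 0) / (1 - lam * 0)|
      = r * (1 - lam ^ 2) / (1 - lam * r) := by
    rw [mobius_sub_mobius_zero hlr.ne, abs_div, abs_mul, hsq, abs_of_pos hr0,
      abs_of_pos (sub_pos.mpr hlr)]
  rw [tsum_abs_pow_mul_mul_pow_succ hlr_abs, tsum_sq_abs_pow_mul_mul_pow_two_mul_succ hlr_abs,
    hmob, hsq, mul_zero, sub_zero, sub_zero, div_one, abs_of_pos hl0]
  have : 1 - lam * r ≠ 0 := (sub_pos.mpr hlr).ne'
  have : 1 - r ≠ 0 := (sub_pos.mpr hr1).ne'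
  have : 1 + lam ≠ 0 := by positivity
  have : 1 - lam ^ 2 * r ^ 2 ≠ 0 := by nlinarith [mul_pos hl0 hr0]
  field_simp
  ring
end

section
/- Fix an integer k ≥ 1 and let r_k ∈ (0,1) be the root of (1-r^k)/(1+r^k) = 2r/(1-r). For all x ∈ [0,1] and 0 ≤ r ≤ r_k, (x + r^k)/(1 + x r^k) + (1 - x^2) r/(1-r) ≤ 1. -/
theorem G7_le_one (k : ℕ) (hk : 1 ≤ k) (rk : ℝ) (hrk : rk ∈ Set.Ioo (0 : ℝ) 1)
    (hroot : (1 - rk ^ k) / (1 + rk ^ k) = 2 * rk / (1 - rk)) :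
    ∀ x : ℝ, 0 ≤ x → x ≤ 1 → ∀ r : ℝ, 0 ≤ r → r ≤ rk →
      (x + r ^ k) / (1 + x * r ^ k) + (1 - x ^ 2) * r / (1 - r) ≤ 1 := by
  obtain ⟨hrk0, hrk1⟩ := hrk
  intro x hx0 hx1 r hr0 hrrk
  have hr1 : r < 1 := lt_of_le_of_lt hrrk hrk1
  set s := r ^ k with hs
  set t := rk ^ k with ht
  have hs0 : 0 ≤ s := pow_nonneg hr0 k
  have ht0 : 0 < t := pow_pos hrk0 k
  have hst : s ≤ t := pow_le_pow_left₀ hr0 hrrk k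
  have htrk : t ≤ rk := by
    calc t = rk ^ k := rfl
    _ ≤ rk ^ 1 := pow_le_pow_of_le_one hrk0.le hrk1.le hk
    _ = rk := pow_one rk
  have ht1 : t < 1 := lt_of_le_of_lt htrk hrk1
  have hs1 : s < 1 := lt_of_le_of_lt hst ht1
  -- cross-multiplied root equation
  have hroot' : (1 - t) * (1 - rk) = 2 * rk * (1 + t) := by
    have h1 : (1 : ℝ) + t > 0 := by linarith
    have h2 : (1 : ℝ) - rk > 0 := by linarith
    field_simp at hroot
    linarith [hroot]
  -- key inequality: 2 r (1+s) ≤ (1-s)(1-r)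
  have key : 2 * r * (1 + s) ≤ (1 - s) * (1 - r) := by
    nlinarith [mul_nonneg (sub_nonneg.2 hst) (sub_nonneg.2 hrrk),
      mul_nonneg hr0 (sub_nonneg.2 hst), mul_nonneg hs0 (sub_nonneg.2 hrrk)]
  have hd1 : (0:ℝ) < 1 + x * s := by nlinarith
  have hd2 : (0:ℝ) < 1 - r := by linarith
  have hAB : (1 + x) * (1 + x * s) ≤ 2 * (1 + s) := by
    nlinarith [mul_nonneg (sub_nonneg.2 hx1) hs0, mul_nonneg (mul_nonneg (sub_nonneg.2 hx1) hs0) hx0]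
  rw [div_add_div _ _ (ne_of_gt hd1) (ne_of_gt hd2), div_le_one (by positivity)]
  nlinarith [mul_nonneg (sub_nonneg.2 hx1) (sub_nonneg.2 key),
    mul_nonneg (mul_nonneg (sub_nonneg.2 hx1) hr0) (sub_nonneg.2 hAB)]
end

section
/- Fix an integer k ≥ 1 and let r_k be the unique root in (0,1) of (1-r^k)/(1+r^k) = 2r/(1-r). For every r with r_k < r < 1, there exists λ ∈ (0,1) such that (λ + r^k)/(1 + λ r^k) + (1-λ^2) r/(1-λr) + (1/(1+λ) + r/(1-r)) (1-λ^2)^2 r^2/(1-λ^2 r^2) > 1. -/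
set_option maxHeartbeats 2000000


theorem sharpness_rk (k : ℕ) (hk : 1 ≤ k) (rk : ℝ) (hrk : rk ∈ Set.Ioo (0 : ℝ) 1)
    (hroot : (1 - rk ^ k) / (1 + rk ^ k) = 2 * rk / (1 - rk)) :
    ∀ r : ℝ, rk < r → r < 1 →
      ∃ lam : ℝ, lam ∈ Set.Ioo (0 : ℝ) 1 ∧
        1 < (lam + r ^ k) / (1 + lam * r ^ k) + (1 - lam ^ 2) * r / (1 - lam * r) +
          (1 / (1 + lam) + r / (1 - r)) *
            ((1 - lam ^ 2) ^ 2 * r ^ 2 / (1 - lam ^ 2 * r ^ 2)) := by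
  intro r hr1 hr2
  obtain ⟨hrk0, hrk1⟩ := hrk
  have hr0 : 0 < r := hrk0.trans hr1
  set s : ℝ := r ^ k with hs
  have hs0 : 0 < s := pow_pos hr0 k
  have hs1 : s < 1 := pow_lt_one₀ hr0.le hr2 (by omega)
  have hsk : rk ^ k < s := pow_lt_pow_left₀ hr1 hrk0.le (by omega)
  have hrkk0 : 0 < rk ^ k := pow_pos hrk0 k
  have hrkk1 : rk ^ k < 1 := pow_lt_one₀ hrk0.le hrk1 (by omega)
  -- Step 1: the key positivity
  have h1r : 0 < 1 - r := by linarith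
  have h1rk : 0 < 1 - rk := by linarith
  have key : (1 - s) / (1 + s) < 2 * r / (1 - r) := by
    have hA : (1 - s) / (1 + s) < (1 - rk ^ k) / (1 + rk ^ k) := by
      rw [div_lt_div_iff₀ (by linarith) (by linarith)]
      nlinarith
    have hB : 2 * rk / (1 - rk) < 2 * r / (1 - r) := by
      rw [div_lt_div_iff₀ h1rk h1r]
      nlinarith
    calc (1 - s) / (1 + s) < (1 - rk ^ k) / (1 + rk ^ k) := hA
      _ = 2 * rk / (1 - rk) := hroot
      _ < 2 * r / (1 - r) := hB
  -- the auxiliary function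
  set g : ℝ → ℝ := fun l =>
    (1 + l) * r / (1 - l * r) - (1 - s) / (1 + l * s) +
      (1 / (1 + l) + r / (1 - r)) * ((1 - l) * (1 + l) ^ 2 * r ^ 2 / (1 - l ^ 2 * r ^ 2))
    with hg
  have hg1 : g 1 = 2 * r / (1 - r) - (1 - s) / (1 + s) := by
    simp only [hg]
    rw [show ((1:ℝ) - 1) = 0 by ring]
    ring
  have hg1pos : 0 < g 1 := by rw [hg1]; linarith
  -- continuity of g at 1
  have hcont : ContinuousAt g 1 := by
    have hd1 : (1 : ℝ) - 1 * r ≠ 0 := by simp; linarith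
    have hd2 : (1 : ℝ) + 1 * s ≠ 0 := by simp; linarith
    have hd3 : (1 : ℝ) + 1 ≠ 0 := by norm_num
    have hd4 : (1 : ℝ) - r ≠ 0 := by linarith
    have hd5 : (1 : ℝ) - 1 ^ 2 * r ^ 2 ≠ 0 := by
      simp only [one_pow, one_mul]; nlinarith
    apply ContinuousAt.add
    apply ContinuousAt.sub
    · exact ContinuousAt.div (by fun_prop) (by fun_prop) hd1
    · exact ContinuousAt.div (by fun_prop) (by fun_prop) hd2
    · apply ContinuousAt.mul
      · apply ContinuousAt.add
        · exact ContinuousAt.div (by fun_prop) (by fun_prop) hd3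
        · exact continuousAt_const
      · exact ContinuousAt.div (by fun_prop) (by fun_prop) hd5
  have hev : ∀ᶠ l in nhds (1:ℝ), 0 < g l := hcont.eventually (eventually_gt_nhds hg1pos)
  have hev2 : ∀ᶠ l in nhdsWithin (1:ℝ) (Set.Iio 1), 0 < g l ∧ l ∈ Set.Ioo (0:ℝ) 1 := by
    filter_upwards [nhdsWithin_le_nhds hev,
      Ioo_mem_nhdsLT_of_mem (by norm_num : (1:ℝ) ∈ Set.Ioc (0:ℝ) 1)] with l h1 h2
    exact ⟨h1, h2⟩
  obtain ⟨lam, hglam, hlam⟩ := hev2.exists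
  obtain ⟨hl0, hl1⟩ := hlam
  refine ⟨lam, ⟨hl0, hl1⟩, ?_⟩
  -- denominators positive
  have hd1 : 0 < 1 - lam * r := by nlinarith
  have hd2 : 0 < 1 + lam * s := by nlinarith
  have hd3 : 0 < 1 + lam := by linarith
  have hd5 : 0 < 1 - lam ^ 2 * r ^ 2 := by
    nlinarith [mul_pos hd1 (by positivity : (0:ℝ) < 1 + lam * r)]
  have hident :
      (lam + s) / (1 + lam * s) + (1 - lam ^ 2) * r / (1 - lam * r) +
        (1 / (1 + lam) + r / (1 - r)) *
          ((1 - lam ^ 2) ^ 2 * r ^ 2 / (1 - lam ^ 2 * r ^ 2)) =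
      1 + (1 - lam) * g lam := by
    simp only [hg]
    field_simp
    ring
  rw [hident]
  nlinarith [mul_pos (by linarith : (0:ℝ) < 1 - lam) hglam]
end
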